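/- arXiv:2506.11704 — 3 statements merged into one kernel-verified Lean document; each statement's English description precedes it below -/
import Mathlib

section
/- Let U be a minimum and minimal isometric-universal graph for {G,H}, where G and H have connected components G_1,…,G_s and H_1,…,H_r with s ≤ r, and fix isometric embeddings of G and of H into U. Let D be the set of pairs (i,j) such that the images of G_i and of H_j lie in the same connected component of U. Then D is a matching of size s (all first coordinates distinct, all second coordinates distinct), and |V(U)| = |V(G)| + |V(H)| − Σ_{(i,j)∈D} (|V(G_i)| + |V(H_j)| − opt(G_i,H_j)), where opt(G_i,H_j) denotes the minimum number of vertices of an isometric-universal graph for {G_i,H_j}. -/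
/-!
Exchange argument. If a union `S` of components of a vertex-minimum isometric-universal graph
`U` is removed and replaced by any graph that isometrically contains the parts of `G` and `H`
mapped into `S`, the result is again isometric-universal, so `|S|` is at most the size of the
replacement. For a single component `K` of `U` this shows that `K` contains the image of some
component of `G` or `H`, that `K` has exactly `opt(G_i, H_j)` vertices if it contains `G_i` and
`H_j`, and `|V(H_j)|` vertices if it contains only `H_j`. If some `G_i` shared no component
with a component of `H`, then, as `s ≤ r`, neither would some `H_j`, and replacing the two
components containing them by the one-point union of `G_i` and `H_j` would save a vertex.
Hence the components of `G` are matched injectively to components of `H`, and counting the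
vertices of `U` component by component gives the formula.
-/

open SimpleGraph

/-- `φ` realizes `G` as an isometric subgraph of `U`: it maps edges to edges and
preserves all distances, where `edist` takes the value `⊤` between vertices in
different connected components. -/
def IsIsometricEmbedding {V W : Type} (G : SimpleGraph V) (U : SimpleGraph W)
    (φ : V → W) : Prop :=
  (∀ u v : V, G.Adj u v → U.Adj (φ u) (φ v)) ∧
  ∀ u v : V, G.edist u v = U.edist (φ u) (φ v)

/-- `U` is an isometric-universal graph for the pair `{G₁, G₂}`: both `G₁` and `G₂`
are isomorphic to isometric subgraphs of `U`. -/
def IsIsoUniversalPair {V₁ V₂ W : Type} (G₁ : SimpleGraph V₁) (G₂ : SimpleGraph V₂)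
    (U : SimpleGraph W) : Prop :=
  (∃ φ : V₁ → W, IsIsometricEmbedding G₁ U φ) ∧
  (∃ φ : V₂ → W, IsIsometricEmbedding G₂ U φ)

/-- The minimum number of vertices of an isometric-universal graph for `{G, H}`. -/
noncomputable def optPair {V W : Type} (G : SimpleGraph V) (H : SimpleGraph W) : ℕ :=
  sInf {n : ℕ | ∃ U : SimpleGraph (Fin n), IsIsoUniversalPair G H U}

/-- The weight `w(i,j) = |V(G_i)| + |V(H_j)| - opt(G_i, H_j)` associated with a pair of
connected components `c` of `G` and `d` of `H`. -/
noncomputable def compWeight {V W : Type} (G : SimpleGraph V) (H : SimpleGraph W)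
    (c : G.ConnectedComponent) (d : H.ConnectedComponent) : ℕ :=
  Nat.card c.supp + Nat.card d.supp - optPair (G.induce c.supp) (H.induce d.supp)

/-- `M` is a matching between connected components: all first coordinates are pairwise
distinct and all second coordinates are pairwise distinct. -/
def IsCompMatching {V W : Type} {G : SimpleGraph V} {H : SimpleGraph W}
    (M : Finset (G.ConnectedComponent × H.ConnectedComponent)) : Prop :=
  (∀ p ∈ M, ∀ q ∈ M, p.1 = q.1 → p = q) ∧ (∀ p ∈ M, ∀ q ∈ M, p.2 = q.2 → p = q)

open Function Finset

namespace SimpleGraph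

variable {V W : Type*} {G : SimpleGraph V} {G' : SimpleGraph W}

lemma edist_le_of_adj_or_eq (f : V → W)
    (hf : ∀ a b, G.Adj a b → G'.Adj (f a) (f b) ∨ f a = f b) (a b : V) :
    G'.edist (f a) (f b) ≤ G.edist a b := by
  obtain h | h := eq_or_ne (G.edist a b) ⊤
  · simp [h]
  obtain ⟨p, hp⟩ := exists_walk_of_edist_ne_top h
  rw [← hp]
  clear hp h
  induction p with
  | nil => simp
  | @cons u v w huv q ih =>
    calc G'.edist (f u) (f w) ≤ G'.edist (f u) (f v) + G'.edist (f v) (f w) :=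
          G'.edist_triangle
      _ ≤ 1 + q.length := add_le_add (edist_le_one_iff_adj_or_eq.mpr (hf u v huv)) ih
      _ = (Walk.cons huv q).length := by rw [Walk.length_cons]; push_cast; ring

lemma edist_eq_of_leftInverse (f : V → W) (r : W → V) (hrf : LeftInverse r f)
    (hf : ∀ a b, G.Adj a b → G'.Adj (f a) (f b))
    (hr : ∀ a b, G'.Adj a b → G.Adj (r a) (r b) ∨ r a = r b) (a b : V) :
    G'.edist (f a) (f b) = G.edist a b := by
  refine le_antisymm (edist_le_of_adj_or_eq f (fun a b h => .inl (hf a b h)) a b) ?_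
  simpa only [hrf a, hrf b] using edist_le_of_adj_or_eq r hr (f a) (f b)

section Sum

variable {H : SimpleGraph W}

lemma edist_sum_inl (a b : V) : (G ⊕g H).edist (.inl a) (.inl b) = G.edist a b :=
  edist_eq_of_leftInverse Sum.inl (Sum.elim id fun _ => a) (fun _ => rfl) (fun _ _ h => h)
    (by rintro (x | x) (y | y) h <;> simp_all) a b

lemma edist_sum_inr (a b : W) : (G ⊕g H).edist (.inr a) (.inr b) = H.edist a b :=
  edist_eq_of_leftInverse Sum.inr (Sum.elim (fun _ => a) id) (fun _ => rfl) (fun _ _ h => h)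
    (by rintro (x | x) (y | y) h <;> simp_all) a b

lemma edist_sum_inl_inr (a : V) (b : W) : (G ⊕g H).edist (.inl a) (.inr b) = ⊤ :=
  edist_eq_top_of_not_reachable (not_reachable_sum_inl_inr a b)

lemma edist_sum_inr_inl (a : W) (b : V) : (G ⊕g H).edist (.inr a) (.inl b) = ⊤ := by
  rw [edist_comm, edist_sum_inl_inr]

end Sum

def IsAdjClosed (G : SimpleGraph V) (S : Set V) : Prop :=
  ∀ ⦃a b⦄, G.Adj a b → a ∈ S → b ∈ S

namespace IsAdjClosed

variable {S T : Set V}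

lemma mem_iff (hS : G.IsAdjClosed S) {a b : V} (h : G.Adj a b) : a ∈ S ↔ b ∈ S :=
  ⟨hS h, hS h.symm⟩

lemma compl (hS : G.IsAdjClosed S) : G.IsAdjClosed Sᶜ :=
  fun _ _ h ha hb => ha (hS h.symm hb)

lemma union (hS : G.IsAdjClosed S) (hT : G.IsAdjClosed T) : G.IsAdjClosed (S ∪ T) :=
  fun _ _ h => Or.imp (hS h) (hT h)

lemma mem_of_reachable (hS : G.IsAdjClosed S) {a b : V} (h : G.Reachable a b) (ha : a ∈ S) :
    b ∈ S := by
  obtain ⟨p⟩ := h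
  induction p with
  | nil => exact ha
  | cons h _ ih => exact ih (hS h ha)

lemma edist_induce (hS : G.IsAdjClosed S) (a b : S) :
    (G.induce S).edist a b = G.edist a b := by
  classical
  refine (edist_eq_of_leftInverse (G := G.induce S) Subtype.val
    (fun x => if h : x ∈ S then ⟨x, h⟩ else a)
    (fun x => by simp) (fun _ _ h => h) (fun x y h => ?_) a b).symm
  by_cases hx : x ∈ S
  · simpa [hx, (hS.mem_iff h).mp hx] using Or.inl h
  · simp [hx, mt (hS.mem_iff h).mpr hx]

end IsAdjClosed

lemma isAdjClosed_supp (K : G.ConnectedComponent) : G.IsAdjClosed K.supp :=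
  fun _ _ h => (K.mem_supp_congr_adj h).mp

lemma card_eq_sum_card_supp [Finite V] (G : SimpleGraph V) [Fintype G.ConnectedComponent] :
    Nat.card V = ∑ c : G.ConnectedComponent, Nat.card c.supp := by
  rw [← Nat.card_congr (Equiv.sigmaFiberEquiv G.connectedComponentMk), Nat.card_sigma]
  rfl

end SimpleGraph

lemma Nat.card_subtype_ne_add_one {α : Type*} [Finite α] (a : α) :
    Nat.card {b // b ≠ a} + 1 = Nat.card α := by
  classical
  rw [← Finite.card_option, Nat.card_congr (Equiv.optionSubtypeNe a)]

namespace IsIsometricEmbedding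

variable {V X Y : Type} {G : SimpleGraph V} {U : SimpleGraph X} {φ : V → X}

lemma of_edist_eq (h : ∀ u v, G.edist u v = U.edist (φ u) (φ v)) :
    IsIsometricEmbedding G U φ :=
  ⟨fun u v huv => edist_eq_one_iff_adj.mp ((h u v).symm.trans (edist_eq_one_iff_adj.mpr huv)), h⟩

lemma of_isEmpty [IsEmpty V] (φ : V → X) : IsIsometricEmbedding G U φ :=
  of_edist_eq isEmptyElim

lemma injective (hφ : IsIsometricEmbedding G U φ) : Injective φ := fun a b hab =>
  edist_eq_zero_iff.mp (by rw [hφ.2, hab, edist_self])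

lemma comp_iso {U' : SimpleGraph Y} (hφ : IsIsometricEmbedding G U φ) (e : U ≃g U') :
    IsIsometricEmbedding G U' (e ∘ φ) :=
  of_edist_eq fun u v => by
    rw [hφ.2, comp_apply, comp_apply, edist_eq_of_leftInverse e e.symm e.symm_apply_apply
      (fun _ _ => e.map_adj_iff.mpr) (fun _ _ h => .inl (e.symm.map_adj_iff.mpr h))]

def toHom (hφ : IsIsometricEmbedding G U φ) : G →g U := ⟨φ, hφ.1 _ _⟩

def compMap (hφ : IsIsometricEmbedding G U φ) : G.ConnectedComponent → U.ConnectedComponent :=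
  ConnectedComponent.map hφ.toHom

@[simp]
lemma compMap_mk (hφ : IsIsometricEmbedding G U φ) (v : V) :
    hφ.compMap (G.connectedComponentMk v) = U.connectedComponentMk (φ v) :=
  rfl

lemma compMap_injective (hφ : IsIsometricEmbedding G U φ) : Injective hφ.compMap := by
  intro c d
  refine ConnectedComponent.ind₂ (fun u v h => ?_) c d
  rw [compMap_mk, compMap_mk, ConnectedComponent.eq, ← edist_ne_top_iff_reachable, ← hφ.2,
    edist_ne_top_iff_reachable] at h
  exact ConnectedComponent.eq.mpr h

lemma apply_mem_supp_iff (hφ : IsIsometricEmbedding G U φ) {v : V} {K : U.ConnectedComponent} :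
    φ v ∈ K.supp ↔ hφ.compMap (G.connectedComponentMk v) = K :=
  Iff.rfl

lemma apply_mem_compMap_supp_iff (hφ : IsIsometricEmbedding G U φ) {v : V}
    {c : G.ConnectedComponent} : φ v ∈ (hφ.compMap c).supp ↔ v ∈ c.supp :=
  hφ.apply_mem_supp_iff.trans hφ.compMap_injective.eq_iff

lemma card_supp_le [Finite X] (hφ : IsIsometricEmbedding G U φ) (c : G.ConnectedComponent) :
    Nat.card c.supp ≤ Nat.card (hφ.compMap c).supp :=
  Nat.card_le_card_of_injective (fun v => ⟨φ v, hφ.apply_mem_compMap_supp_iff.mpr v.2⟩)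
    fun _ _ h => Subtype.ext (hφ.injective (congrArg Subtype.val h))

variable {S : Set X} {A : Set V}

lemma isAdjClosed_of_apply_mem_iff (hφ : IsIsometricEmbedding G U φ) (hS : U.IsAdjClosed S)
    (hA : ∀ v, φ v ∈ S ↔ v ∈ A) : G.IsAdjClosed A :=
  fun a b h ha => (hA b).mp (hS (hφ.1 a b h) ((hA a).mpr ha))

lemma induce (hφ : IsIsometricEmbedding G U φ) (hS : U.IsAdjClosed S)
    (hA : ∀ v, φ v ∈ S ↔ v ∈ A) :
    IsIsometricEmbedding (G.induce A) (U.induce S) fun v => ⟨φ v, (hA v).mpr v.2⟩ :=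
  of_edist_eq fun u v => by
    rw [(hφ.isAdjClosed_of_apply_mem_iff hS hA).edist_induce, hS.edist_induce]
    exact hφ.2 u v

open Classical in
lemma exchange (hφ : IsIsometricEmbedding G U φ) (hS : U.IsAdjClosed S)
    (hA : ∀ v, φ v ∈ S ↔ v ∈ A) {Z : SimpleGraph Y} {g : A → Y}
    (hg : IsIsometricEmbedding (G.induce A) Z g) :
    ∃ f, IsIsometricEmbedding G (U.induce Sᶜ ⊕g Z) f := by
  have hA' := hφ.isAdjClosed_of_apply_mem_iff hS hA
  refine ⟨fun v => if h : v ∈ A then .inr (g ⟨v, h⟩) else .inl ⟨φ v, mt (hA v).mp h⟩,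
    of_edist_eq fun u v => ?_⟩
  by_cases hu : u ∈ A <;> by_cases hv : v ∈ A <;> simp only [hu, hv, dite_true, dite_false]
  · rw [edist_sum_inr, ← hg.2, hA'.edist_induce]
  · rw [edist_sum_inr_inl]
    exact edist_eq_top_of_not_reachable fun h => hv (hA'.mem_of_reachable h hu)
  · rw [edist_sum_inl_inr]
    exact edist_eq_top_of_not_reachable fun h => hu (hA'.mem_of_reachable h.symm hv)
  · rw [edist_sum_inl, hS.compl.edist_induce]
    exact hφ.2 u v

end IsIsometricEmbedding

namespace IsIsoUniversalPair

variable {V W X Y : Type} {G : SimpleGraph V} {H : SimpleGraph W} {U : SimpleGraph X}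

lemma of_iso {U' : SimpleGraph Y} (h : IsIsoUniversalPair G H U) (e : U ≃g U') :
    IsIsoUniversalPair G H U' :=
  let ⟨⟨_, hφ⟩, ⟨_, hψ⟩⟩ := h
  ⟨⟨_, hφ.comp_iso e⟩, ⟨_, hψ.comp_iso e⟩⟩

lemma exists_fin [Finite X] (h : IsIsoUniversalPair G H U) :
    ∃ U' : SimpleGraph (Fin (Nat.card X)), IsIsoUniversalPair G H U' :=
  ⟨_, h.of_iso (Iso.map (Finite.equivFin X) U)⟩

lemma optPair_le [Finite X] (h : IsIsoUniversalPair G H U) : optPair G H ≤ Nat.card X :=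
  Nat.sInf_le h.exists_fin

end IsIsoUniversalPair

section OptPair

variable {V W : Type}

lemma isIsoUniversalPair_sum (G : SimpleGraph V) (H : SimpleGraph W) :
    IsIsoUniversalPair G H (G ⊕g H) :=
  ⟨⟨_, .of_edist_eq fun u v => (edist_sum_inl u v).symm⟩,
    ⟨_, .of_edist_eq fun u v => (edist_sum_inr u v).symm⟩⟩

lemma exists_isIsoUniversalPair_optPair [Finite V] [Finite W] (G : SimpleGraph V)
    (H : SimpleGraph W) : ∃ U : SimpleGraph (Fin (optPair G H)), IsIsoUniversalPair G H U :=
  Nat.sInf_mem (s := {n | ∃ U : SimpleGraph (Fin n), IsIsoUniversalPair G H U})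
    ⟨_, (isIsoUniversalPair_sum G H).exists_fin⟩

lemma optPair_induce_empty_le [Finite W] (G : SimpleGraph V) (H : SimpleGraph W) :
    optPair (G.induce ∅) H ≤ Nat.card W :=
  IsIsoUniversalPair.optPair_le ⟨⟨isEmptyElim, .of_isEmpty _⟩, ⟨id, .of_edist_eq fun _ _ => rfl⟩⟩

end OptPair

section Wedge

variable {α β : Type} (A : SimpleGraph α) (B : SimpleGraph β) (x₀ : α) (y₀ : β)

/-- The one-point union of `A` and `B`, in which `y₀` is identified with `x₀`. -/
def wedge : SimpleGraph (α ⊕ {y // y ≠ y₀}) where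
  Adj
    | .inl a, .inl b => A.Adj a b
    | .inr a, .inr b => B.Adj a b
    | .inl a, .inr b => a = x₀ ∧ B.Adj y₀ b
    | .inr a, .inl b => b = x₀ ∧ B.Adj y₀ a
  symm := ⟨by rintro (a | a) (b | b) h <;> first | exact h.symm | exact h⟩
  loopless := ⟨by rintro (a | a) h; exacts [A.irrefl h, B.irrefl h]⟩

open Classical in
noncomputable def wedgeInr (y : β) : α ⊕ {y // y ≠ y₀} :=
  if h : y = y₀ then .inl x₀ else .inr ⟨y, h⟩

variable {A B x₀ y₀}

lemma isIsometricEmbedding_wedge_inl : IsIsometricEmbedding A (wedge A B x₀ y₀) Sum.inl :=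
  .of_edist_eq fun u v => (edist_eq_of_leftInverse (G' := wedge A B x₀ y₀) Sum.inl
    (Sum.elim id fun _ => x₀) (fun _ => rfl) (fun _ _ h => h)
    (by rintro (a | a) (b | b) h <;> simp_all [wedge]) u v).symm

lemma isIsometricEmbedding_wedgeInr :
    IsIsometricEmbedding B (wedge A B x₀ y₀) (wedgeInr x₀ y₀) := by
  have hr : LeftInverse (Sum.elim (fun _ => y₀) Subtype.val) (wedgeInr x₀ y₀) := fun y => by
    by_cases h : y = y₀ <;> simp [wedgeInr, h]
  refine .of_edist_eq fun u v => (edist_eq_of_leftInverse _ _ hr (fun a b h => ?_)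
    (by rintro (a | a) (b | b) h <;> simp_all [wedge, adj_comm]) u v).symm
  by_cases ha : a = y₀ <;> by_cases hb : b = y₀ <;> simp_all [wedgeInr, wedge, adj_comm]

lemma optPair_lt_card_add_card [Finite α] [Finite β] [Nonempty α] [Nonempty β]
    (A : SimpleGraph α) (B : SimpleGraph β) : optPair A B < Nat.card α + Nat.card β := by
  obtain ⟨x₀⟩ := ‹Nonempty α›
  obtain ⟨y₀⟩ := ‹Nonempty β›
  have h := IsIsoUniversalPair.optPair_le (U := wedge A B x₀ y₀)
    ⟨⟨_, isIsometricEmbedding_wedge_inl⟩, ⟨_, isIsometricEmbedding_wedgeInr⟩⟩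
  rw [Nat.card_sum] at h
  have := Nat.card_subtype_ne_add_one y₀
  omega

end Wedge

section Minimum

variable {V W X : Type} {G : SimpleGraph V} {H : SimpleGraph W} {U : SimpleGraph X}
  {φ : V → X} {ψ : W → X}

lemma exists_mk_eq_iff_compMap_eq (hφ : IsIsometricEmbedding G U φ)
    (hψ : IsIsometricEmbedding H U ψ) (c : G.ConnectedComponent) (d : H.ConnectedComponent) :
    (∃ x y, G.connectedComponentMk x = c ∧ H.connectedComponentMk y = d ∧
      U.connectedComponentMk (φ x) = U.connectedComponentMk (ψ y)) ↔
      hφ.compMap c = hψ.compMap d := by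
  constructor
  · rintro ⟨x, y, rfl, rfl, h⟩
    exact h
  · intro h
    obtain ⟨x, rfl⟩ := c.exists_rep
    obtain ⟨y, rfl⟩ := d.exists_rep
    exact ⟨x, y, rfl, rfl, h⟩

lemma card_le_optPair_of_forall [Finite V] [Finite W]
    (h : ∀ (Y : Type) (_ : Finite Y) (U' : SimpleGraph Y), IsIsoUniversalPair G H U' →
      Nat.card X ≤ Nat.card Y) : Nat.card X ≤ optPair G H := by
  obtain ⟨U, hU⟩ := exists_isIsoUniversalPair_optPair G H
  simpa using h _ inferInstance U hU

variable [Finite V] [Finite W] [Finite X]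

lemma card_le_optPair_induce (hmin : Nat.card X ≤ optPair G H) (hφ : IsIsometricEmbedding G U φ)
    (hψ : IsIsometricEmbedding H U ψ) {S : Set X} (hS : U.IsAdjClosed S) {A : Set V}
    {B : Set W} (hA : ∀ v, φ v ∈ S ↔ v ∈ A) (hB : ∀ w, ψ w ∈ S ↔ w ∈ B) :
    Nat.card S ≤ optPair (G.induce A) (H.induce B) := by
  obtain ⟨Z, ⟨g, hg⟩, ⟨h, hh⟩⟩ := exists_isIsoUniversalPair_optPair (G.induce A) (H.induce B)
  have hle := hmin.trans
    (IsIsoUniversalPair.optPair_le ⟨hφ.exchange hS hA hg, hψ.exchange hS hB hh⟩)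
  rw [Nat.card_sum, Nat.card_fin, Nat.card_coe_set_eq] at hle
  have := Set.ncard_add_ncard_compl S
  rw [Nat.card_coe_set_eq]
  omega

lemma card_supp_compMap_eq_optPair (hmin : Nat.card X ≤ optPair G H)
    (hφ : IsIsometricEmbedding G U φ) (hψ : IsIsometricEmbedding H U ψ)
    {c : G.ConnectedComponent} {d : H.ConnectedComponent} (hcd : hφ.compMap c = hψ.compMap d) :
    Nat.card (hφ.compMap c).supp = optPair (G.induce c.supp) (H.induce d.supp) := by
  have hS := isAdjClosed_supp (hφ.compMap c)
  have hA : ∀ v, φ v ∈ (hφ.compMap c).supp ↔ v ∈ c.supp := fun _ =>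
    hφ.apply_mem_compMap_supp_iff
  have hB : ∀ w, ψ w ∈ (hφ.compMap c).supp ↔ w ∈ d.supp := fun _ =>
    hcd ▸ hψ.apply_mem_compMap_supp_iff
  exact le_antisymm (card_le_optPair_induce hmin hφ hψ hS hA hB)
    (IsIsoUniversalPair.optPair_le ⟨⟨_, hφ.induce hS hA⟩, ⟨_, hψ.induce hS hB⟩⟩)

lemma card_supp_compMap_eq_of_forall_ne (hmin : Nat.card X ≤ optPair G H)
    (hφ : IsIsometricEmbedding G U φ) (hψ : IsIsometricEmbedding H U ψ)
    {d : H.ConnectedComponent} (hd : ∀ c, hφ.compMap c ≠ hψ.compMap d) :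
    Nat.card (hψ.compMap d).supp = Nat.card d.supp := by
  refine le_antisymm ?_ (hψ.card_supp_le d)
  calc Nat.card (hψ.compMap d).supp
      ≤ optPair (G.induce ∅) (H.induce d.supp) :=
        card_le_optPair_induce hmin hφ hψ (isAdjClosed_supp _)
          (fun _ => iff_of_false (hφ.apply_mem_supp_iff.not.mpr (hd _)) id)
          fun _ => hψ.apply_mem_compMap_supp_iff
    _ ≤ Nat.card d.supp := optPair_induce_empty_le _ _

lemma mem_range_compMap_or (hmin : Nat.card X ≤ optPair G H) (hφ : IsIsometricEmbedding G U φ)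
    (hψ : IsIsometricEmbedding H U ψ) (K : U.ConnectedComponent) :
    K ∈ Set.range hφ.compMap ∨ K ∈ Set.range hψ.compMap := by
  by_contra! hK
  have hle := card_le_optPair_induce hmin hφ hψ (isAdjClosed_supp K) (A := ∅) (B := ∅)
    (fun _ => iff_of_false (fun hv => hK.1 ⟨_, hφ.apply_mem_supp_iff.mp hv⟩) id)
    (fun _ => iff_of_false (fun hw => hK.2 ⟨_, hψ.apply_mem_supp_iff.mp hw⟩) id)
  have := optPair_induce_empty_le G (H.induce ∅)
  have : Nonempty K.supp := K.nonempty_supp.to_subtype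
  have := Nat.card_pos (α := K.supp)
  simp only [Nat.card_of_isEmpty] at *
  omega

lemma exists_compMap_eq (hmin : Nat.card X ≤ optPair G H) (hφ : IsIsometricEmbedding G U φ)
    (hψ : IsIsometricEmbedding H U ψ)
    (hsr : Nat.card G.ConnectedComponent ≤ Nat.card H.ConnectedComponent)
    (c : G.ConnectedComponent) : ∃ d, hφ.compMap c = hψ.compMap d := by
  by_contra! hc
  obtain ⟨d, hd⟩ : ∃ d, ∀ c', hφ.compMap c' ≠ hψ.compMap d := by
    by_contra! hall
    choose m hm using hall
    have hm_inj : Injective fun d => (⟨m d, fun h => hc d (h ▸ hm d)⟩ : {c' // c' ≠ c}) :=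
      fun d d' h => hψ.compMap_injective <| by
        rw [← hm, ← hm]
        exact congrArg (hφ.compMap ∘ Subtype.val) h
    have := Nat.card_le_card_of_injective _ hm_inj
    have := Nat.card_subtype_ne_add_one c
    omega
  have hS := (isAdjClosed_supp (hφ.compMap c)).union (isAdjClosed_supp (hψ.compMap d))
  have hle := card_le_optPair_induce hmin hφ hψ hS (A := c.supp) (B := d.supp)
    (fun _ => by rw [Set.mem_union, hφ.apply_mem_compMap_supp_iff,
      or_iff_left (hφ.apply_mem_supp_iff.not.mpr (hd _))])
    (fun _ => by rw [Set.mem_union, hψ.apply_mem_compMap_supp_iff,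
      or_iff_right (hψ.apply_mem_supp_iff.not.mpr fun h => hc _ h.symm)])
  rw [Nat.card_coe_set_eq,
    Set.ncard_union_eq (pairwise_disjoint_supp_connectedComponent _ (hc d)),
    ← Nat.card_coe_set_eq, ← Nat.card_coe_set_eq] at hle
  have : Nonempty c.supp := c.nonempty_supp.to_subtype
  have : Nonempty d.supp := d.nonempty_supp.to_subtype
  have := optPair_lt_card_add_card (G.induce c.supp) (H.induce d.supp)
  have := hφ.card_supp_le c
  have := hψ.card_supp_le d
  omega

end Minimum

section Counting

variable {V W X : Type} {G : SimpleGraph V} {H : SimpleGraph W} {U : SimpleGraph X}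
  {φ : V → X} {ψ : W → X}

lemma isCompMatching_image_graph [Fintype G.ConnectedComponent]
    [DecidableEq (G.ConnectedComponent × H.ConnectedComponent)]
    {f : G.ConnectedComponent → H.ConnectedComponent} (hf : Injective f) :
    IsCompMatching (univ.image fun c => (c, f c)) := by
  refine ⟨?_, ?_⟩ <;> rintro _ h₁ _ h₂ h <;>
    obtain ⟨c, -, rfl⟩ := mem_image.mp h₁ <;> obtain ⟨c', -, rfl⟩ := mem_image.mp h₂
  · rw [show c = c' from h]
  · rw [hf h]

lemma injective_of_compMap_eq (hφ : IsIsometricEmbedding G U φ) {hψ : IsIsometricEmbedding H U ψ}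
    {pr : G.ConnectedComponent → H.ConnectedComponent}
    (hpr : ∀ c, hφ.compMap c = hψ.compMap (pr c)) : Injective pr :=
  fun c c' h => hφ.compMap_injective (by rw [hpr, hpr, h])

lemma card_add_sum_compWeight_eq [Finite V] [Finite W] [Finite X]
    [Fintype G.ConnectedComponent] [Fintype H.ConnectedComponent] [Fintype U.ConnectedComponent]
    (hmin : Nat.card X ≤ optPair G H) (hφ : IsIsometricEmbedding G U φ)
    (hψ : IsIsometricEmbedding H U ψ) {pr : G.ConnectedComponent → H.ConnectedComponent}
    (hpr : ∀ c, hφ.compMap c = hψ.compMap (pr c)) :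
    Nat.card X + ∑ c, compWeight G H c (pr c) = Nat.card V + Nat.card W := by
  classical
  set s := univ.map ⟨pr, injective_of_compMap_eq hφ hpr⟩
  have hΨ : Bijective hψ.compMap := ⟨hψ.compMap_injective, fun K =>
    (mem_range_compMap_or hmin hφ hψ K).elim (fun ⟨c, hc⟩ => ⟨pr c, by rw [← hpr, hc]⟩) id⟩
  have hX : Nat.card X = ∑ d ∈ sᶜ, Nat.card d.supp +
      ∑ c, optPair (G.induce c.supp) (H.induce (pr c).supp) := by
    rw [U.card_eq_sum_card_supp, ← hΨ.sum_comp, ← sum_compl_add_sum s, sum_map,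
      Embedding.coeFn_mk]
    refine congrArg₂ (· + ·) (sum_congr rfl fun d hd => ?_) (sum_congr rfl fun c _ => ?_)
    · refine card_supp_compMap_eq_of_forall_ne hmin hφ hψ fun c h => mem_compl.mp hd ?_
      exact mem_map.mpr ⟨c, mem_univ c, hψ.compMap_injective ((hpr c).symm.trans h)⟩
    · rw [← hpr]
      exact card_supp_compMap_eq_optPair hmin hφ hψ (hpr c)
  have hW : Nat.card W = ∑ d ∈ sᶜ, Nat.card d.supp + ∑ c, Nat.card (pr c).supp := by
    rw [H.card_eq_sum_card_supp, ← sum_compl_add_sum s, sum_map]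
    rfl
  have hweight : ∑ c, compWeight G H c (pr c) +
      ∑ c, optPair (G.induce c.supp) (H.induce (pr c).supp) =
      ∑ c : G.ConnectedComponent, Nat.card c.supp + ∑ c, Nat.card (pr c).supp := by
    rw [← sum_add_distrib, ← sum_add_distrib]
    -- the truncated subtraction in `compWeight` is exact, as `opt(G_i, H_j) < |G_i| + |H_j|`
    refine sum_congr rfl fun c _ => Nat.sub_add_cancel ?_
    have : Nonempty c.supp := c.nonempty_supp.to_subtype
    have : Nonempty (pr c).supp := (pr c).nonempty_supp.to_subtype
    exact (optPair_lt_card_add_card _ _).le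
  rw [hX, hW, G.card_eq_sum_card_supp]
  omega

end Counting

theorem stmt_6_general {V W X : Type} [Fintype V] [Fintype W] [Fintype X]
    (G : SimpleGraph V) (H : SimpleGraph W) (U : SimpleGraph X)
    (hsr : Nat.card G.ConnectedComponent ≤ Nat.card H.ConnectedComponent)
    (φ : V → X) (ψ : W → X)
    (hφ : IsIsometricEmbedding G U φ) (hψ : IsIsometricEmbedding H U ψ)
    (hmin : ∀ (Y : Type) (_ : Finite Y) (U' : SimpleGraph Y),
      IsIsoUniversalPair G H U' → Nat.card X ≤ Nat.card Y)
    (D : Finset (G.ConnectedComponent × H.ConnectedComponent))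
    (hD : ∀ (c : G.ConnectedComponent) (d : H.ConnectedComponent),
      (c, d) ∈ D ↔ ∃ (x : V) (y : W), G.connectedComponentMk x = c ∧
        H.connectedComponentMk y = d ∧
        U.connectedComponentMk (φ x) = U.connectedComponentMk (ψ y)) :
    IsCompMatching D ∧ D.card = Nat.card G.ConnectedComponent ∧
      Nat.card X = Nat.card V + Nat.card W - ∑ p ∈ D, compWeight G H p.1 p.2 := by
  classical
  have hmin' := card_le_optPair_of_forall hmin
  choose pr hpr using exists_compMap_eq hmin' hφ hψ hsr
  have hgraph : Injective fun c => (c, pr c) := fun _ _ h => congrArg Prod.fst h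
  obtain rfl : D = univ.image fun c => (c, pr c) := by
    ext ⟨c, d⟩
    rw [hD, exists_mk_eq_iff_compMap_eq hφ hψ, hpr, hψ.compMap_injective.eq_iff, mem_image]
    simp [eq_comm]
  refine ⟨isCompMatching_image_graph (injective_of_compMap_eq hφ hpr), ?_, ?_⟩
  · rw [card_image_of_injective _ hgraph, card_univ, Nat.card_eq_fintype_card]
  · rw [sum_image fun _ _ _ _ h => hgraph h]
    exact Nat.eq_sub_of_add_eq (card_add_sum_compWeight_eq hmin' hφ hψ hpr)

/-- Let `U` be a minimum and minimal isometric-universal graph for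
`{G, H}`, where `G` has `s` components, `H` has `r` components and `s ≤ r`, with fixed
isometric embeddings `φ` of `G` and `ψ` of `H` into `U`. Let `D` be the set of pairs of
components of `G` and `H` whose images lie in a common component of `U`. Then `D` is a
matching of size `s`, and
`|V(U)| = |V(G)| + |V(H)| - ∑_{(i,j) ∈ D} (|V(G_i)| + |V(H_j)| - opt(G_i, H_j))`. -/
theorem stmt_6 {V W X : Type} [Fintype V] [Fintype W] [Fintype X]
    (G : SimpleGraph V) (H : SimpleGraph W) (U : SimpleGraph X)
    (hsr : Nat.card G.ConnectedComponent ≤ Nat.card H.ConnectedComponent)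
    (φ : V → X) (ψ : W → X)
    (hφ : IsIsometricEmbedding G U φ) (hψ : IsIsometricEmbedding H U ψ)
    (hmin : ∀ (Y : Type) (_ : Finite Y) (U' : SimpleGraph Y),
      IsIsoUniversalPair G H U' → Nat.card X ≤ Nat.card Y)
    (hminimal : ∀ H' : U.Subgraph, H' ≠ ⊤ → ¬ IsIsoUniversalPair G H H'.coe)
    (D : Finset (G.ConnectedComponent × H.ConnectedComponent))
    (hD : ∀ (c : G.ConnectedComponent) (d : H.ConnectedComponent),
      (c, d) ∈ D ↔ ∃ (x : V) (y : W), G.connectedComponentMk x = c ∧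
        H.connectedComponentMk y = d ∧
        U.connectedComponentMk (φ x) = U.connectedComponentMk (ψ y)) :
    IsCompMatching D ∧ D.card = Nat.card G.ConnectedComponent ∧
      Nat.card X = Nat.card V + Nat.card W - ∑ p ∈ D, compWeight G H p.1 p.2 :=
  stmt_6_general G H U hsr φ ψ hφ hψ hmin D hD
end

section
/- For every integer t ≥ 9 there exists a family {T1, T2, T3} of three trees, each with exactly 2t^3+2 vertices, such that no minimum isometric-universal graph for {T1, T2, T3} is a tree; that is, every isometric-universal tree for {T1, T2, T3} has strictly more vertices than some isometric-universal graph for {T1, T2, T3}. -/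
/-!
The three trees are double brooms: spines of lengths `3`, `4`, `6` with about `n = t³` leaves at
each end. The ports `0`, `3`, `7` cut a `13`-cycle into arcs of exactly these lengths, so with
`n - 1`, `n - 1`, `n - 2` leaves attached at the ports (`3n + 9` vertices in all) each broom maps
onto an arc, and folding the rest of the cycle onto that arc is a `1`-Lipschitz retraction, which
makes the embedding isometric.

In a host tree the images of the broom ends form pairs at distances `3`, `4`, `6`. Distances in a
tree have even triangle sums, so these pairs cannot live on three vertices: at least four distinct
vertices of degree `≥ n - 3` occur. Two vertices of a tree share at most one neighbour, so the tree
has at least `4(n - 3) - 6 > 3n + 9` vertices.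
-/

open SimpleGraph

/-- `U` is an isometric-universal graph for the family `{G₁, G₂, G₃}`. -/
def IsIsoUniversalTriple {V₁ V₂ V₃ W : Type} (G₁ : SimpleGraph V₁) (G₂ : SimpleGraph V₂)
    (G₃ : SimpleGraph V₃) (U : SimpleGraph W) : Prop :=
  (∃ φ : V₁ → W, IsIsometricEmbedding G₁ U φ) ∧
  (∃ φ : V₂ → W, IsIsometricEmbedding G₂ U φ) ∧
  (∃ φ : V₃ → W, IsIsometricEmbedding G₃ U φ)

open Finset

namespace Finset

variable {ι α : Type*} [DecidableEq ι] [DecidableEq α]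

lemma sum_card_le_card_biUnion_add_choose_two (s : Finset ι) (A : ι → Finset α)
    (hA : (s : Set ι).Pairwise fun i j => #(A i ∩ A j) ≤ 1) :
    ∑ i ∈ s, #(A i) ≤ #(s.biUnion A) + (#s).choose 2 := by
  induction s using Finset.induction_on with
  | empty => simp
  | insert a s ha ih =>
    have hinter : #(A a ∩ s.biUnion A) ≤ #s := by
      rw [inter_biUnion]
      simpa using card_biUnion_le_card_mul s _ 1 fun b hb =>
        hA (mem_insert_self a s) (mem_insert_of_mem hb) (ne_of_mem_of_not_mem hb ha).symm
    have hunion := card_union_add_card_inter (A a) (s.biUnion A)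
    have ih := ih (hA.mono (by simp))
    have hchoose : (#s + 1).choose 2 = (#s).choose 2 + #s := by
      simp [Nat.choose_succ_succ', add_comm]
    rw [sum_insert ha, biUnion_insert, card_insert_of_notMem ha, hchoose]
    omega

end Finset

namespace SimpleGraph

variable {V W W' : Type*}

/-- Edges go to edges or are collapsed: these are the `1`-Lipschitz maps for the path metric. -/
def IsWeakHom (G : SimpleGraph V) (H : SimpleGraph W) (f : V → W) : Prop :=
  ∀ ⦃u v⦄, G.Adj u v → H.Adj (f u) (f v) ∨ f u = f v

namespace IsWeakHom

variable {G : SimpleGraph V} {H : SimpleGraph W} {f : V → W}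

lemma exists_walk_length_le (hf : IsWeakHom G H f) {u v : V} (p : G.Walk u v) :
    ∃ q : H.Walk (f u) (f v), q.length ≤ p.length := by
  induction p with
  | nil => exact ⟨.nil, le_rfl⟩
  | cons hadj _ ih =>
    obtain ⟨q, hq⟩ := ih
    rcases hf hadj with h | h
    · exact ⟨.cons h q, by simpa using hq⟩
    · exact ⟨q.copy h.symm rfl, by rw [Walk.length_copy, Walk.length_cons]; omega⟩

lemma reachable (hf : IsWeakHom G H f) {u v : V} (h : G.Reachable u v) :
    H.Reachable (f u) (f v) := by
  obtain ⟨p⟩ := h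
  obtain ⟨q, -⟩ := hf.exists_walk_length_le p
  exact ⟨q⟩

lemma edist_le (hf : IsWeakHom G H f) (u v : V) : H.edist (f u) (f v) ≤ G.edist u v := by
  by_cases h : G.edist u v = ⊤
  · simp [h]
  obtain ⟨p, hp⟩ := exists_walk_of_edist_ne_top h
  obtain ⟨q, hq⟩ := hf.exists_walk_length_le p
  rw [← hp]
  exact (SimpleGraph.edist_le q).trans (by exact_mod_cast hq)

end IsWeakHom

lemma isWeakHom_of_adj {G : SimpleGraph V} {H : SimpleGraph W} {f : V → W}
    (hf : ∀ u v, G.Adj u v → H.Adj (f u) (f v)) : IsWeakHom G H f :=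
  fun u v h => .inl (hf u v h)

lemma isAcyclic_hasse {α : Type*} [LinearOrder α] : (hasse α).IsAcyclic := by
  refine isAcyclic_iff_forall_adj_isBridge.mpr fun a b hab => ?_
  wlog hcov : a ⋖ b generalizing a b
  · rw [Sym2.eq_swap]
    exact this b a hab.symm (hab.resolve_left hcov)
  rw [isBridge_iff]
  intro hreach
  -- without the edge `a ⋖ b`, the predicate `· ≤ a` is constant on connected components
  have hweak : IsWeakHom ((hasse α).deleteEdges {s(a, b)}) ⊥ (· ≤ a) := by
    intro x y hxy
    rw [deleteEdges_adj, Set.mem_singleton_iff] at hxy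
    refine .inr (propext ?_)
    wlog hxy' : x ⋖ y generalizing x y
    · exact (this ⟨hxy.1.symm, by rw [Sym2.eq_swap]; exact hxy.2⟩
        (hxy.1.resolve_left hxy')).symm
    refine ⟨fun hxa => le_of_not_gt fun hay => hxy.2 ?_, hxy'.lt.le.trans⟩
    obtain rfl : x = a := le_antisymm hxa (hxy'.le_of_lt hay)
    rw [hcov.unique_right hxy']
  simpa [hcov.lt.not_ge] using reachable_bot.mp (hweak.reachable hreach)

lemma isTree_pathGraph (n : ℕ) : (pathGraph (n + 1)).IsTree :=
  ⟨pathGraph_connected n, isAcyclic_hasse⟩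

lemma pathGraph_val_le_val_add_length {n : ℕ} {u v : Fin n} (p : (pathGraph n).Walk u v) :
    (v : ℕ) ≤ u + p.length := by
  induction p with
  | nil => simp
  | cons h _ ih =>
    rw [pathGraph_adj] at h
    simp only [Walk.length_cons]
    omega

lemma pathGraph_exists_walk_zero (g : ℕ) :
    ∀ i : Fin (g + 1), ∃ p : (pathGraph (g + 1)).Walk 0 i, p.length = i := by
  intro ⟨i, hi⟩
  induction i with
  | zero => exact ⟨.nil, rfl⟩
  | succ i ih =>
    obtain ⟨p, hp⟩ := ih (by omega)
    exact ⟨p.concat (pathGraph_adj.mpr (.inl rfl)), by simp [hp]⟩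

lemma pathGraph_edist_zero_last (g : ℕ) : (pathGraph (g + 1)).edist 0 (Fin.last g) = g := by
  obtain ⟨p, hp⟩ := pathGraph_exists_walk_zero g (Fin.last g)
  obtain ⟨q, hq⟩ := p.reachable.exists_walk_length_eq_edist
  refine le_antisymm (by simpa [hp] using edist_le p) ?_
  rw [← hq]
  exact_mod_cast by simpa using pathGraph_val_le_val_add_length q

section Pendants

def withPendants (G : SimpleGraph W) (k : W → ℕ) : SimpleGraph (W ⊕ Σ w, Fin (k w)) where
  Adj
    | .inl u, .inl v => G.Adj u v
    | .inl u, .inr l => l.1 = u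
    | .inr l, .inl u => l.1 = u
    | .inr _, .inr _ => False
  symm := ⟨by rintro (u | l) (v | m) h <;> first | exact G.adj_symm h | exact h⟩
  loopless := ⟨by rintro (u | l) h <;> first | exact G.loopless.irrefl u h | exact h⟩

variable {G : SimpleGraph W} {k : W → ℕ}

@[simp] lemma withPendants_adj_inl_inl {u v : W} :
    (G.withPendants k).Adj (.inl u) (.inl v) ↔ G.Adj u v := .rfl

@[simp] lemma withPendants_adj_inl_inr {u : W} {l : Σ w, Fin (k w)} :
    (G.withPendants k).Adj (.inl u) (.inr l) ↔ l.1 = u := .rfl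

@[simp] lemma withPendants_adj_inr_inl {u : W} {l : Σ w, Fin (k w)} :
    (G.withPendants k).Adj (.inr l) (.inl u) ↔ l.1 = u := .rfl

@[simp] lemma not_withPendants_adj_inr_inr {l m : Σ w, Fin (k w)} :
    ¬(G.withPendants k).Adj (.inr l) (.inr m) := id

lemma isWeakHom_inl_withPendants : IsWeakHom G (G.withPendants k) Sum.inl :=
  isWeakHom_of_adj fun _ _ h => h

lemma isWeakHom_elim_withPendants :
    IsWeakHom (G.withPendants k) G (Sum.elim id Sigma.fst) := by
  rintro (u | l) (v | m) h <;> simp_all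

lemma withPendants_edist_inl (u v : W) :
    (G.withPendants k).edist (.inl u) (.inl v) = G.edist u v :=
  le_antisymm (isWeakHom_inl_withPendants.edist_le u v)
    (isWeakHom_elim_withPendants.edist_le (.inl u) (.inl v))

lemma Connected.withPendants (hG : G.Connected) : (G.withPendants k).Connected := by
  have hbase (u v : W) : (G.withPendants k).Reachable (.inl u) (.inl v) :=
    isWeakHom_inl_withPendants.reachable (hG u v)
  have hleaf (l : Σ w, Fin (k w)) : (G.withPendants k).Reachable (.inr l) (.inl l.1) :=
    Adj.reachable (withPendants_adj_inr_inl.mpr rfl)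
  obtain ⟨w⟩ := hG.nonempty
  refine connected_iff_exists_forall_reachable _ |>.mpr ⟨.inl w, ?_⟩
  rintro (u | l)
  exacts [hbase w u, (hbase w l.1).trans (hleaf l).symm]

lemma IsAcyclic.withPendants (hG : G.IsAcyclic) : (G.withPendants k).IsAcyclic := by
  have hleaf (l : Σ w, Fin (k w)) : (G.withPendants k).IsBridge s(.inl l.1, .inr l) := by
    refine isBridge_iff.mpr (not_reachable_of_neighborSet_right_eq_empty Sum.inl_ne_inr ?_)
    ext (x | ⟨x, i⟩) <;> simp_all [eq_comm]
  refine isAcyclic_iff_forall_adj_isBridge.mpr ?_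
  rintro (u | l) (v | m) h
  · rw [isBridge_iff]
    intro hreach
    refine isBridge_iff.mp (isAcyclic_iff_forall_adj_isBridge.mp hG h) ?_
    have hweak : IsWeakHom ((G.withPendants k).deleteEdges {s(.inl u, .inl v)})
        (G.deleteEdges {s(u, v)}) (Sum.elim id Sigma.fst) := by
      rintro (x | ⟨x, i⟩) (y | ⟨y, j⟩) hxy <;> simp_all
    exact hweak.reachable hreach
  · obtain rfl : m.1 = u := h
    exact hleaf m
  · obtain rfl : l.1 = v := h
    rw [Sym2.eq_swap]
    exact hleaf l
  · exact h.elim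

lemma IsTree.withPendants (hG : G.IsTree) : (G.withPendants k).IsTree :=
  ⟨hG.connected.withPendants, hG.isAcyclic.withPendants⟩

lemma card_withPendants [Fintype W] (k : W → ℕ) :
    Nat.card (W ⊕ Σ w, Fin (k w)) = Nat.card W + ∑ w, k w := by
  simp

variable {G' : SimpleGraph W'} {k' : W' → ℕ}

def pendantMap (φ : W → W') (hk : ∀ w, k w ≤ k' (φ w)) :
    W ⊕ (Σ w, Fin (k w)) → W' ⊕ Σ w', Fin (k' w')
  | .inl w => .inl (φ w)
  | .inr ⟨w, i⟩ => .inr ⟨φ w, Fin.castLE (hk w) i⟩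

def pendantRetraction (k : W → ℕ) (ρ : W' → W) :
    W' ⊕ (Σ w', Fin (k' w')) → W ⊕ Σ w, Fin (k w)
  | .inl w' => .inl (ρ w')
  | .inr ⟨w', j⟩ => if h : (j : ℕ) < k (ρ w') then .inr ⟨ρ w', ⟨j, h⟩⟩ else .inl (ρ w')

lemma pendantMap_adj {φ : W → W'} (hk : ∀ w, k w ≤ k' (φ w))
    (hφ : ∀ u v, G.Adj u v → G'.Adj (φ u) (φ v)) (x y : W ⊕ Σ w, Fin (k w))
    (h : (G.withPendants k).Adj x y) :
    (G'.withPendants k').Adj (pendantMap φ hk x) (pendantMap φ hk y) := by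
  rcases x with u | ⟨u, i⟩ <;> rcases y with v | ⟨v, j⟩ <;>
    simp_all [pendantMap]

lemma IsWeakHom.pendantRetraction {ρ : W' → W} (hρ : IsWeakHom G' G ρ) :
    IsWeakHom (G'.withPendants k') (G.withPendants k) (pendantRetraction k ρ) := by
  rintro (u | ⟨u, i⟩) (v | ⟨v, j⟩) h
  · simpa [SimpleGraph.pendantRetraction] using hρ h
  all_goals simp only [withPendants_adj_inl_inr, withPendants_adj_inr_inl,
    not_withPendants_adj_inr_inr] at h
  all_goals
    subst h
    simp only [SimpleGraph.pendantRetraction]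
    split_ifs <;> simp

lemma leftInverse_pendantRetraction {φ : W → W'} {ρ : W' → W} (hk : ∀ w, k w ≤ k' (φ w))
    (hρφ : Function.LeftInverse ρ φ) :
    Function.LeftInverse (pendantRetraction k ρ) (pendantMap φ hk) := by
  rintro (w | ⟨w, i⟩)
  · exact congrArg Sum.inl (hρφ w)
  · have hi : (i : ℕ) < k (ρ (φ w)) := (hρφ w).symm ▸ i.isLt
    simp only [pendantRetraction, pendantMap, Fin.val_castLE, dif_pos hi]
    rw [Sum.inr.injEq, Sigma.ext_iff]
    exact ⟨hρφ w, (Fin.heq_ext_iff (congrArg k (hρφ w))).mpr rfl⟩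

end Pendants

section Tree

variable {G : SimpleGraph V}

lemma IsAcyclic.card_inter_neighborFinset_le_one [Fintype V] [DecidableRel G.Adj]
    [DecidableEq V] (hG : G.IsAcyclic) {u v : V} (huv : u ≠ v) :
    #(G.neighborFinset u ∩ G.neighborFinset v) ≤ 1 := by
  refine Finset.card_le_one.mpr fun a ha b hb => ?_
  simp only [Finset.mem_inter, mem_neighborFinset] at ha hb
  have hp : (Walk.cons ha.1 (Walk.cons ha.2.symm Walk.nil)).IsPath := by
    simp [ha.1.ne, ha.2.ne', huv]
  have hq : (Walk.cons hb.1 Walk.nil).IsPath := by simp [hb.1.ne]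
  have hb' := hG.mem_support_of_ne_mem_support_of_adj_of_isPath hp hq hb.2
    (by simp [huv.symm, hb.2.ne])
  simp only [Walk.support_cons, Walk.support_nil, List.mem_cons, List.not_mem_nil,
    or_false] at hb'
  rcases hb' with rfl | rfl | rfl
  exacts [(hb.1.ne rfl).elim, rfl, (hb.2.ne rfl).elim]

lemma IsAcyclic.card_mul_le_card_add_choose_two [Fintype V] [DecidableRel G.Adj]
    [DecidableEq V] (hG : G.IsAcyclic) (s : Finset V) {m : ℕ} (hs : ∀ v ∈ s, m ≤ G.degree v) :
    #s * m ≤ Fintype.card V + (#s).choose 2 :=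
  calc #s * m ≤ ∑ v ∈ s, #(G.neighborFinset v) := by
        simpa using Finset.card_nsmul_le_sum s _ m hs
    _ ≤ #(s.biUnion (G.neighborFinset ·)) + (#s).choose 2 :=
        Finset.sum_card_le_card_biUnion_add_choose_two s _
          fun _ _ _ _ huv => hG.card_inter_neighborFinset_le_one huv
    _ ≤ Fintype.card V + (#s).choose 2 := by gcongr; exact Finset.card_le_univ _

lemma IsTree.even_dist_add_dist_add_dist (hG : G.IsTree) (x y z : V) :
    Even (G.dist x y + G.dist y z + G.dist x z) := by
  have hwalk {u v : V} (p : G.Walk u v) : Even (G.dist x u + p.length + G.dist x v) := by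
    induction p with
    | nil => simp
    | cons h p ih =>
      rw [Walk.length_cons, Nat.even_iff] at *
      rcases hG.dist_eq_dist_add_one_of_adj x h with h' | h' <;> omega
  obtain ⟨p, hp⟩ := hG.connected.exists_walk_length_eq_dist y z
  simpa [hp] using hwalk p

lemma dist_eq_of_mem_triple {a b c u v : V} [DecidableEq V] (hu : u ∈ ({a, b, c} : Finset V))
    (hv : v ∈ ({a, b, c} : Finset V)) :
    G.dist u v = 0 ∨ G.dist u v = G.dist a b ∨ G.dist u v = G.dist a c ∨
      G.dist u v = G.dist b c := by
  simp only [Finset.mem_insert, Finset.mem_singleton] at hu hv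
  rcases hu with rfl | rfl | rfl <;> rcases hv with rfl | rfl | rfl <;> simp [dist_comm]

lemma IsTree.four_le_card_of_dist [DecidableEq V] (hG : G.IsTree) {x₁ y₁ x₂ y₂ x₃ y₃ : V}
    (d₁ : G.dist x₁ y₁ = 3) (d₂ : G.dist x₂ y₂ = 4) (d₃ : G.dist x₃ y₃ = 6) :
    4 ≤ #({x₁, y₁, x₂, y₂, x₃, y₃} : Finset V) := by
  set s : Finset V := {x₁, y₁, x₂, y₂, x₃, y₃}
  by_contra! hs
  have hxy : x₁ ≠ y₁ := fun h => by simp [h] at d₁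
  have hpair : ({x₁, y₁} : Finset V) ⊆ s := by simp [s, Finset.insert_subset_iff]
  have : Nonempty V := ⟨x₁⟩
  obtain ⟨w, hw⟩ := Finset.card_le_one_iff_subset_singleton.mp
    (show #(s \ {x₁, y₁}) ≤ 1 by rw [Finset.card_sdiff_of_subset hpair, Finset.card_pair hxy]; omega)
  have hsub (v : V) (hv : v ∈ s) : v ∈ ({x₁, y₁, w} : Finset V) := by
    by_cases hv' : v ∈ ({x₁, y₁} : Finset V)
    · simp only [Finset.mem_insert, Finset.mem_singleton] at hv' ⊢
      tauto
    · have := hw (Finset.mem_sdiff.mpr ⟨hv, hv'⟩)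
      simp_all
  have h₂ := dist_eq_of_mem_triple (G := G) (hsub x₂ (by simp [s])) (hsub y₂ (by simp [s]))
  have h₃ := dist_eq_of_mem_triple (G := G) (hsub x₃ (by simp [s])) (hsub y₃ (by simp [s]))
  have hparity := Nat.even_iff.mp (hG.even_dist_add_dist_add_dist x₁ y₁ w)
  -- `4` and `6` must be `dist x₁ w` and `dist y₁ w`, but `3 + dist y₁ w + dist x₁ w` is even
  omega

end Tree

end SimpleGraph

lemma isIsometricEmbedding_of_leftInverse {V W : Type} {G : SimpleGraph V}
    {H : SimpleGraph W} {φ : V → W} {ρ : W → V} (hφ : ∀ u v, G.Adj u v → H.Adj (φ u) (φ v))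
    (hρ : IsWeakHom H G ρ) (hρφ : Function.LeftInverse ρ φ) : IsIsometricEmbedding G H φ := by
  refine ⟨hφ, fun u v => le_antisymm ?_ ((isWeakHom_of_adj hφ).edist_le u v)⟩
  simpa only [hρφ _] using hρ.edist_le (φ u) (φ v)

lemma IsIsometricEmbedding.injective_s7 {V W : Type} {G : SimpleGraph V} {U : SimpleGraph W}
    {φ : V → W} (hφ : IsIsometricEmbedding G U φ) : Function.Injective φ := fun u v h => by
  simpa [h] using hφ.2 u v

lemma isIsometricEmbedding_pendantMap {W W' : Type} {G : SimpleGraph W} {G' : SimpleGraph W'}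
    {k : W → ℕ} {k' : W' → ℕ} {φ : W → W'} {ρ : W' → W} (hk : ∀ w, k w ≤ k' (φ w))
    (hφ : ∀ u v, G.Adj u v → G'.Adj (φ u) (φ v)) (hρ : IsWeakHom G' G ρ)
    (hρφ : Function.LeftInverse ρ φ) :
    IsIsometricEmbedding (G.withPendants k) (G'.withPendants k') (pendantMap φ hk) :=
  isIsometricEmbedding_of_leftInverse (pendantMap_adj hk hφ) hρ.pendantRetraction
    (leftInverse_pendantRetraction hk hρφ)

lemma IsIsometricEmbedding.le_card_neighborSet {W X : Type} [Finite X] {G : SimpleGraph W}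
    {k : W → ℕ} {S : SimpleGraph X} {φ : W ⊕ (Σ w, Fin (k w)) → X}
    (hφ : IsIsometricEmbedding (G.withPendants k) S φ) (w : W) :
    k w ≤ Nat.card (S.neighborSet (φ (.inl w))) := by
  let leaf (i : Fin (k w)) : S.neighborSet (φ (.inl w)) :=
    ⟨φ (.inr ⟨w, i⟩), hφ.1 _ _ (withPendants_adj_inl_inr.mpr rfl)⟩
  have hleaf : Function.Injective leaf := fun i j h => by
    simpa [leaf] using hφ.injective_s7 (Subtype.ext_iff.mp h)
  simpa using Nat.card_le_card_of_injective leaf hleaf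

def broomLeaves (g a b : ℕ) : Fin (g + 1) → ℕ :=
  Pi.single 0 a + Pi.single (Fin.last g) b

abbrev broom (g a b : ℕ) : SimpleGraph (Fin (g + 1) ⊕ Σ i, Fin (broomLeaves g a b i)) :=
  (pathGraph (g + 1)).withPendants (broomLeaves g a b)

section Broom

variable {g a b : ℕ}

lemma isTree_broom : (broom g a b).IsTree :=
  (isTree_pathGraph g).withPendants

lemma card_broom : Nat.card (Fin (g + 1) ⊕ Σ i, Fin (broomLeaves g a b i)) = g + 1 + a + b := by
  rw [card_withPendants]
  simp [broomLeaves, Finset.sum_add_distrib, add_assoc]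

lemma IsIsometricEmbedding.dist_broom_hubs {X : Type} {S : SimpleGraph X}
    {φ : Fin (g + 1) ⊕ (Σ i, Fin (broomLeaves g a b i)) → X}
    (hφ : IsIsometricEmbedding (broom g a b) S φ) :
    S.dist (φ (.inl 0)) (φ (.inl (Fin.last g))) = g := by
  simp [SimpleGraph.dist, ← hφ.2, withPendants_edist_inl, pathGraph_edist_zero_last]

lemma IsIsometricEmbedding.le_card_neighborSet_broom_hubs {X : Type} [Finite X]
    {S : SimpleGraph X} {φ : Fin (g + 1) ⊕ (Σ i, Fin (broomLeaves g a b i)) → X}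
    (hφ : IsIsometricEmbedding (broom g a b) S φ) :
    a ≤ Nat.card (S.neighborSet (φ (.inl 0))) ∧
      b ≤ Nat.card (S.neighborSet (φ (.inl (Fin.last g)))) :=
  ⟨(show a ≤ broomLeaves g a b 0 by simp [broomLeaves]).trans (hφ.le_card_neighborSet 0),
    (show b ≤ broomLeaves g a b (Fin.last g) by simp [broomLeaves]).trans
      (hφ.le_card_neighborSet _)⟩

end Broom

def portLeaves (n : ℕ) : Fin 13 → ℕ :=
  Pi.single 0 (n - 1) + Pi.single 3 (n - 1) + Pi.single 7 (n - 2)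

abbrev cyclePortGraph (n : ℕ) : SimpleGraph (Fin 13 ⊕ Σ i, Fin (portLeaves n i)) :=
  (cycleGraph 13).withPendants (portLeaves n)

lemma card_cyclePortGraph {n : ℕ} (hn : 2 ≤ n) :
    Nat.card (Fin 13 ⊕ Σ i, Fin (portLeaves n i)) = 3 * n + 9 := by
  rw [card_withPendants]
  simp [portLeaves, Finset.sum_add_distrib]
  omega

def cycleArc (s g : ℕ) (i : Fin (g + 1)) : Fin 13 :=
  ⟨(s + i) % 13, Nat.mod_lt _ (by norm_num)⟩

lemma isIsoUniversalTriple_cyclePortGraph (n : ℕ) :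
    IsIsoUniversalTriple (broom 3 (n - 1) (n - 1)) (broom 4 (n - 1) (n - 2))
      (broom 6 (n - 2) (n - 3)) (cyclePortGraph n) := by
  refine ⟨⟨_, isIsometricEmbedding_pendantMap (φ := cycleArc 0 3)
      (ρ := ![0, 1, 2, 3, 2, 1, 0, 0, 0, 0, 0, 0, 0]) ?_ ?_ ?_ ?_⟩,
    ⟨_, isIsometricEmbedding_pendantMap (φ := cycleArc 3 4)
      (ρ := ![3, 2, 1, 0, 1, 2, 3, 4, 3, 4, 4, 4, 4]) ?_ ?_ ?_ ?_⟩,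
    ⟨_, isIsometricEmbedding_pendantMap (φ := cycleArc 7 6)
      (ρ := ![6, 5, 4, 3, 2, 1, 1, 0, 1, 2, 3, 4, 5]) ?_ ?_ ?_ ?_⟩⟩
  all_goals first
    | (simp only [IsWeakHom, pathGraph_adj]; decide)
    | decide
    | (intro w; fin_cases w <;> simp [broomLeaves, portLeaves, cycleArc] <;> omega)

lemma four_mul_le_card_add_six {X : Type} [Finite X] {S : SimpleGraph X} (hS : S.IsTree)
    {a₁ b₁ a₂ b₂ a₃ b₃ m : ℕ}
    (hU : IsIsoUniversalTriple (broom 3 a₁ b₁) (broom 4 a₂ b₂) (broom 6 a₃ b₃) S)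
    (hm : m ≤ a₁ ∧ m ≤ b₁ ∧ m ≤ a₂ ∧ m ≤ b₂ ∧ m ≤ a₃ ∧ m ≤ b₃) :
    4 * m ≤ Nat.card X + 6 := by
  classical
  have := Fintype.ofFinite X
  obtain ⟨⟨φ₁, h₁⟩, ⟨φ₂, h₂⟩, ⟨φ₃, h₃⟩⟩ := hU
  obtain ⟨s, hs, hcard⟩ := Finset.exists_subset_card_eq
    (hS.four_le_card_of_dist h₁.dist_broom_hubs h₂.dist_broom_hubs h₃.dist_broom_hubs)
  have hdeg : ∀ v ∈ s, m ≤ S.degree v := by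
    intro v hv
    rw [← card_neighborSet_eq_degree, ← Nat.card_eq_fintype_card]
    have := hs hv
    simp only [Finset.mem_insert, Finset.mem_singleton] at this
    obtain ⟨ha₁, hb₁, ha₂, hb₂, ha₃, hb₃⟩ := hm
    have ⟨c₁, d₁⟩ := h₁.le_card_neighborSet_broom_hubs
    have ⟨c₂, d₂⟩ := h₂.le_card_neighborSet_broom_hubs
    have ⟨c₃, d₃⟩ := h₃.le_card_neighborSet_broom_hubs
    rcases this with rfl | rfl | rfl | rfl | rfl | rfl <;> omega
  have := hS.isAcyclic.card_mul_le_card_add_choose_two s hdeg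
  rw [hcard, Nat.card_eq_fintype_card] at *
  simpa [Nat.choose_two_right] using this

/-- For every `t ≥ 9` there are three trees, each with exactly
`2t³ + 2` vertices, such that every isometric-universal tree for the family has
strictly more vertices than some isometric-universal graph for it. -/
theorem stmt_7 (t : ℕ) (ht : 9 ≤ t) :
    ∃ (V₁ V₂ V₃ : Type) (_ : Fintype V₁) (_ : Fintype V₂) (_ : Fintype V₃)
      (T₁ : SimpleGraph V₁) (T₂ : SimpleGraph V₂) (T₃ : SimpleGraph V₃),
      T₁.IsTree ∧ T₂.IsTree ∧ T₃.IsTree ∧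
      Nat.card V₁ = 2 * t ^ 3 + 2 ∧ Nat.card V₂ = 2 * t ^ 3 + 2 ∧
      Nat.card V₃ = 2 * t ^ 3 + 2 ∧
      ∀ (X : Type) (_ : Finite X) (S : SimpleGraph X), S.IsTree →
        IsIsoUniversalTriple T₁ T₂ T₃ S →
        ∃ (Y : Type) (_ : Finite Y) (U : SimpleGraph Y),
          IsIsoUniversalTriple T₁ T₂ T₃ U ∧ Nat.card Y < Nat.card X := by
  have hn : 9 ^ 3 ≤ t ^ 3 := Nat.pow_le_pow_left ht 3
  generalize t ^ 3 = n at hn ⊢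
  refine ⟨_, _, _, inferInstance, inferInstance, inferInstance,
    broom 3 (n - 1) (n - 1), broom 4 (n - 1) (n - 2), broom 6 (n - 2) (n - 3),
    isTree_broom, isTree_broom, isTree_broom, ?_, ?_, ?_, fun X _ S hS hU => ?_⟩
  · rw [card_broom]; omega
  · rw [card_broom]; omega
  · rw [card_broom]; omega
  refine ⟨_, inferInstance, cyclePortGraph n, isIsoUniversalTriple_cyclePortGraph n, ?_⟩
  have := four_mul_le_card_add_six (m := n - 3) hS hU (by omega)
  rw [card_cyclePortGraph (by omega)]
  omega
end

section
/- Let t ≥ 3 be an integer, let T be a tree, and let S and S' be subgraphs of T that are isometric subgraphs of T and are isomorphic to a type-p star and a type-p' star respectively, with p ≤ p' in {1,2,3} and with centers c and c'. If c ≠ c', then |V(S) ∩ V(S')| ≤ 1 + 2·t^{3−p'}. If p ≠ p' (regardless of whether c = c'), then |V(S) ∩ V(S')| ≤ 1 + t^{p+3−p'}. -/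
open SimpleGraph

/-- The subdivided star with `b` branches of length `ℓ`: the star `K_{1,b}` in which
every edge is replaced by a path of length `ℓ`. The center is the vertex `none`, and
`some (j, r)` is the vertex of branch `j` at distance `r + 1` from the center. -/
def SubdividedStar (b ℓ : ℕ) : SimpleGraph (Option (Fin b × Fin ℓ)) :=
  SimpleGraph.fromRel fun x y =>
    match x, y with
    | none, some (_, r) => (r : ℕ) = 0
    | some (j, r), some (j', r') => j = j' ∧ (r' : ℕ) = (r : ℕ) + 1
    | _, _ => False

/-- The type-`i` star (for the parameter `t`): the star `K_{1,t^i}` in which every edge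
is replaced by a path of length `t^(3-i)`. It has `t³ + 1` vertices and its center is
the vertex `none`. -/
def typeStar (t i : ℕ) : SimpleGraph (Option (Fin (t ^ i) × Fin (t ^ (3 - i)))) :=
  SubdividedStar (t ^ i) (t ^ (3 - i))

/-! An isometric subgraph of a tree is geodesically convex, so `S ∩ S'`, read inside the star
`S'`, is a geodesically convex set of vertices of a subdivided star. Such a set is contained in
one branch together with the center `c'`, or it contains `c'` and, on every branch it meets, the
neighbor of `c'`; these neighbors lie in `S` and are therefore neighbors of `c'` in `S`. So
`S ∩ S'` meets at most `max 1 (deg_S c')` branches of length `t^(3-p')`, and `deg_S c'` is at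
most `2` if `c'` is not the center of `S`, and at most `t^p` in any case. -/

namespace SimpleGraph

variable {V W : Type*} {G : SimpleGraph V} {H : SimpleGraph W}

def IsGeodesicallyConvex (G : SimpleGraph V) (U : Set V) : Prop :=
  ∀ ⦃u v w : V⦄, u ∈ U → w ∈ U → G.dist u v + G.dist v w = G.dist u w → v ∈ U

lemma IsGeodesicallyConvex.preimage {U : Set V} (hU : G.IsGeodesicallyConvex U) {f : W → V}
    (hf : ∀ a b, G.dist (f a) (f b) = H.dist a b) : H.IsGeodesicallyConvex (f ⁻¹' U) :=
  fun a b c ha hc h => hU ha hc (by rwa [hf, hf, hf])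

lemma Hom.edist_le (f : G →g H) (u v : V) : H.edist (f u) (f v) ≤ G.edist u v := by
  by_cases h : G.Reachable u v
  · obtain ⟨p, hp⟩ := h.exists_walk_length_eq_edist
    exact (SimpleGraph.edist_le (p.map f)).trans_eq (by rw [Walk.length_map, hp])
  · rw [edist_eq_top_of_not_reachable h]
    exact le_top

lemma Iso.edist_eq (f : G ≃g H) (u v : V) : H.edist (f u) (f v) = G.edist u v :=
  le_antisymm (Hom.edist_le f.toHom u v) <| by
    simpa using Hom.edist_le f.symm.toHom (f u) (f v)

lemma Iso.dist_eq (f : G ≃g H) (u v : V) : H.dist (f u) (f v) = G.dist u v :=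
  congrArg ENat.toNat (f.edist_eq u v)

lemma Walk.abs_sub_le_length {f : V → ℤ} (hf : ∀ ⦃x y⦄, G.Adj x y → |f x - f y| ≤ 1)
    {u v : V} (p : G.Walk u v) : |f u - f v| ≤ p.length := by
  induction p with
  | nil => simp
  | @cons x y z h q ih =>
    calc |f x - f z| ≤ |f x - f y| + |f y - f z| := abs_sub_le _ _ _
      _ ≤ 1 + q.length := add_le_add (hf h) ih
      _ = (q.cons h).length := by push_cast [Walk.length_cons]; ring

lemma Reachable.abs_sub_le_dist {f : V → ℤ} (hf : ∀ ⦃x y⦄, G.Adj x y → |f x - f y| ≤ 1)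
    {u v : V} (h : G.Reachable u v) : |f u - f v| ≤ G.dist u v := by
  obtain ⟨p, hp⟩ := h.exists_walk_length_eq_dist
  exact hp ▸ p.abs_sub_le_length hf

namespace Subgraph

def IsIsometric (S : G.Subgraph) : Prop :=
  ∀ u v : S.verts, S.coe.edist u v = G.edist u v

variable {S : G.Subgraph}

lemma IsIsometric.dist_eq (hS : S.IsIsometric) (u v : S.verts) : S.coe.dist u v = G.dist u v :=
  congrArg ENat.toNat (hS u v)

lemma IsIsometric.adj {u v : V} (hS : S.IsIsometric) (hu : u ∈ S.verts) (hv : v ∈ S.verts)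
    (h : G.Adj u v) : S.Adj u v := by
  have : S.coe.edist ⟨u, hu⟩ ⟨v, hv⟩ = 1 := (hS _ _).trans (edist_eq_one_iff_adj.mpr h)
  exact edist_eq_one_iff_adj.mp this

lemma IsIsometric.ncard_preimage_inter_neighborSet_le [Finite V] (hS : S.IsIsometric)
    (f : H →g G) (hf : Function.Injective f) {a : W} (ha : f a ∈ S.verts) :
    (f ⁻¹' S.verts ∩ H.neighborSet a).ncard ≤ (S.neighborSet (f a)).ncard :=
  Set.ncard_le_ncard_of_injOn f (fun _ hb => hS.adj ha hb.1 (f.map_adj hb.2)) hf.injOn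

end Subgraph

/-- In a tree the geodesic between two vertices is its unique path, and an isometric subgraph
contains a geodesic between any two of its vertices. -/
lemma IsTree.isGeodesicallyConvex_verts {T : SimpleGraph V} (hT : T.IsTree) {S : T.Subgraph}
    (hS : S.IsIsometric) : T.IsGeodesicallyConvex S.verts := by
  intro u y v hu hv hy
  have hconn := hT.connected
  obtain ⟨p₁, hp₁⟩ := (hconn.preconnected u y).exists_walk_length_eq_dist
  obtain ⟨p₂, hp₂⟩ := (hconn.preconnected y v).exists_walk_length_eq_dist
  have hreach : S.coe.Reachable ⟨u, hu⟩ ⟨v, hv⟩ := by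
    rw [← edist_ne_top_iff_reachable, hS]
    exact edist_ne_top_iff_reachable.mpr (hconn.preconnected u v)
  obtain ⟨q, hq⟩ := hreach.exists_walk_length_eq_dist
  have hpath : (p₁.append p₂).IsPath :=
    (p₁.append p₂).isPath_of_length_eq_dist (by rw [Walk.length_append, hp₁, hp₂, hy])
  have hqpath : (q.map S.hom).IsPath :=
    (q.map S.hom).isPath_of_length_eq_dist (by rw [Walk.length_map, hq, hS.dist_eq]; rfl)
  have heq : p₁.append p₂ = q.map S.hom := (hT.existsUnique_path u v).unique hpath hqpath
  have hy : y ∈ (q.map S.hom).support :=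
    heq ▸ (Walk.mem_support_append_iff _ _).mpr (.inl p₁.end_mem_support)
  rw [Walk.support_map, List.mem_map] at hy
  obtain ⟨z, -, rfl⟩ := hy
  exact z.2

end SimpleGraph

namespace SubdividedStar

variable {b ℓ : ℕ}

lemma adj_none_some {j : Fin b} {r : Fin ℓ} :
    (SubdividedStar b ℓ).Adj none (some (j, r)) ↔ (r : ℕ) = 0 := by
  simp [SubdividedStar]

lemma adj_some_none {j : Fin b} {r : Fin ℓ} :
    (SubdividedStar b ℓ).Adj (some (j, r)) none ↔ (r : ℕ) = 0 := by
  rw [adj_comm, adj_none_some]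

lemma adj_some_some {j j' : Fin b} {r r' : Fin ℓ} :
    (SubdividedStar b ℓ).Adj (some (j, r)) (some (j', r')) ↔
      j = j' ∧ ((r' : ℕ) = r + 1 ∨ (r : ℕ) = r' + 1) := by
  simp only [SubdividedStar, fromRel_adj, ne_eq, Option.some.injEq, Prod.mk.injEq, Fin.ext_iff]
  grind

def walkToRoot (j : Fin b) (hℓ : 0 < ℓ) :
    (r : ℕ) → (hr : r < ℓ) → (SubdividedStar b ℓ).Walk (some (j, ⟨r, hr⟩)) (some (j, ⟨0, hℓ⟩))
  | 0, _ => .nil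
  | r + 1, hr => .cons (adj_some_some.mpr ⟨rfl, .inr rfl⟩) (walkToRoot j hℓ r (by omega))

@[simp]
lemma length_walkToRoot (j : Fin b) (hℓ : 0 < ℓ) (r : ℕ) (hr : r < ℓ) :
    (walkToRoot j hℓ r hr).length = r := by
  induction r with
  | zero => rfl
  | succ r ih => simp [walkToRoot, ih]

def walkToCenter (j : Fin b) (r : Fin ℓ) : (SubdividedStar b ℓ).Walk (some (j, r)) none :=
  (walkToRoot j r.pos r r.isLt).concat (adj_some_none.mpr rfl)

@[simp]
lemma length_walkToCenter (j : Fin b) (r : Fin ℓ) : (walkToCenter j r).length = r + 1 := by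
  simp [walkToCenter]

/-- The potential behind the lower bounds on distances in the star. -/
def weightedDepth (w : Fin b → ℤ) : Option (Fin b × Fin ℓ) → ℤ
  | none => 0
  | some (j, r) => w j * ((r : ℕ) + 1)

lemma abs_weightedDepth_sub_le {w : Fin b → ℤ} (hw : ∀ j, |w j| ≤ 1)
    ⦃x y : Option (Fin b × Fin ℓ)⦄ (h : (SubdividedStar b ℓ).Adj x y) :
    |weightedDepth w x - weightedDepth w y| ≤ 1 := by
  rcases x with _ | ⟨j, r⟩ <;> rcases y with _ | ⟨j', r'⟩
  · simp at h
  · simpa [weightedDepth, adj_none_some.mp h] using hw j'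
  · simpa [weightedDepth, adj_some_none.mp h] using hw j
  · obtain ⟨rfl, hr⟩ := adj_some_some.mp h
    rw [weightedDepth, weightedDepth, ← mul_sub, abs_mul]
    have : |((r : ℕ) + 1 : ℤ) - ((r' : ℕ) + 1)| = 1 := by rw [abs_eq (by norm_num)]; omega
    rw [this, mul_one]
    exact hw j

lemma dist_some_root (j : Fin b) (r : Fin ℓ) :
    (SubdividedStar b ℓ).dist (some (j, r)) (some (j, ⟨0, r.pos⟩)) = r := by
  refine le_antisymm ((dist_le (walkToRoot j r.pos r r.isLt)).trans_eq (by simp)) ?_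
  have := Reachable.abs_sub_le_dist (abs_weightedDepth_sub_le (w := 1) (by simp))
    ⟨walkToRoot j r.pos r r.isLt⟩
  simp [weightedDepth] at this
  omega

lemma dist_some_none (j : Fin b) (r : Fin ℓ) :
    (SubdividedStar b ℓ).dist (some (j, r)) none = r + 1 := by
  refine le_antisymm ((dist_le (walkToCenter j r)).trans_eq (by simp)) ?_
  have := Reachable.abs_sub_le_dist (abs_weightedDepth_sub_le (w := 1) (by simp))
    ⟨walkToCenter j r⟩
  simp [weightedDepth] at this
  have := (le_abs_self _).trans this
  omega

lemma dist_some_some_of_ne {j j' : Fin b} (hj : j ≠ j') (r r' : Fin ℓ) :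
    (SubdividedStar b ℓ).dist (some (j, r)) (some (j', r')) = r + r' + 2 := by
  let p := (walkToCenter j r).append (walkToCenter j' r').reverse
  refine le_antisymm ((dist_le p).trans_eq (by simp [p]; ring)) ?_
  have := Reachable.abs_sub_le_dist
    (abs_weightedDepth_sub_le (w := fun k => if k = j then 1 else -1) (by intro k; split <;> simp))
    ⟨p⟩
  simp [weightedDepth, hj.symm] at this
  have := (le_abs_self _).trans this
  omega

lemma ncard_neighborSet_none_le (hℓ : 0 < ℓ) :
    ((SubdividedStar b ℓ).neighborSet none).ncard ≤ b := by
  have hsub : (SubdividedStar b ℓ).neighborSet none ⊆ Set.range fun j => some (j, ⟨0, hℓ⟩) := by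
    rintro (_ | ⟨j, r⟩) h
    · simp at h
    · exact ⟨j, by simp [(adj_none_some.mp h).symm]⟩
  calc _ ≤ (Set.range fun j : Fin b => some (j, (⟨0, hℓ⟩ : Fin ℓ))).ncard :=
        Set.ncard_le_ncard hsub
    _ = b := by rw [Set.ncard_range_of_injective (fun _ _ h => by simpa using h), Nat.card_fin]

lemma ncard_neighborSet_some_le (j : Fin b) (r : Fin ℓ) :
    ((SubdividedStar b ℓ).neighborSet (some (j, r))).ncard ≤ 2 := by
  have hsub : (SubdividedStar b ℓ).neighborSet (some (j, r)) ⊆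
      {if h : (r : ℕ) = 0 then none else some (j, ⟨r - 1, by omega⟩),
        if h : (r : ℕ) + 1 < ℓ then some (j, ⟨r + 1, h⟩) else none} := by
    rintro (_ | ⟨j', r'⟩) h
    · simp [adj_some_none.mp h]
    · obtain ⟨rfl, hr | hr⟩ := adj_some_some.mp h
      · right
        rw [dif_pos (by omega)]
        simp [Fin.ext_iff, hr]
      · left
        rw [dif_neg (by omega)]
        simp [hr]
  calc _ ≤ _ := Set.ncard_le_ncard hsub
    _ ≤ _ := Set.ncard_insert_le _ _
    _ = 2 := by rw [Set.ncard_singleton]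

lemma ncard_neighborSet_le (hℓ : 0 < ℓ) (x : Option (Fin b × Fin ℓ)) :
    ((SubdividedStar b ℓ).neighborSet x).ncard ≤ max b 2 := by
  rcases x with _ | ⟨j, r⟩
  · exact (ncard_neighborSet_none_le hℓ).trans (le_max_left _ _)
  · exact (ncard_neighborSet_some_le j r).trans (le_max_right _ _)

lemma ncard_le_of_forall_mem_branches {U : Set (Option (Fin b × Fin ℓ))} {B : Set (Fin b)}
    (hUB : ∀ j r, some (j, r) ∈ U → j ∈ B) : U.ncard ≤ 1 + B.ncard * ℓ := by
  have hsub : U ⊆ insert none (some '' (B ×ˢ Set.univ)) := by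
    rintro (_ | ⟨j, r⟩) h
    · exact Set.mem_insert _ _
    · exact Set.mem_insert_of_mem _ ⟨(j, r), ⟨hUB j r h, trivial⟩, rfl⟩
  calc U.ncard ≤ (some '' (B ×ˢ (Set.univ : Set (Fin ℓ)))).ncard + 1 :=
        (Set.ncard_le_ncard hsub).trans (Set.ncard_insert_le _ _)
    _ ≤ (B ×ˢ (Set.univ : Set (Fin ℓ))).ncard + 1 := by gcongr; exact Set.ncard_image_le
    _ = 1 + B.ncard * ℓ := by rw [Set.ncard_prod, Set.ncard_univ, Nat.card_fin, add_comm]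

/-- A convex set meeting two branches contains the center and, on each branch it meets, the
neighbor of the center; so the branches it meets are counted by the degree of the center in it. -/
theorem ncard_le_of_isGeodesicallyConvex (hℓ : 0 < ℓ) {U : Set (Option (Fin b × Fin ℓ))}
    (hU : (SubdividedStar b ℓ).IsGeodesicallyConvex U) {n : ℕ} (hn : 1 ≤ n)
    (hdeg : none ∈ U → (U ∩ (SubdividedStar b ℓ).neighborSet none).ncard ≤ n) :
    U.ncard ≤ 1 + n * ℓ := by
  let B : Set (Fin b) := {j | ∃ r, some (j, r) ∈ U}
  refine (ncard_le_of_forall_mem_branches (B := B) fun j r h => ⟨r, h⟩).trans ?_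
  gcongr
  rcases B.subsingleton_or_nontrivial with hB | ⟨j₁, ⟨r₁, h₁⟩, j₂, ⟨r₂, h₂⟩, hj⟩
  · exact (Set.ncard_le_one_iff_subsingleton.mpr hB).trans hn
  have hcenter : none ∈ U := hU h₁ h₂ <| by
    rw [dist_some_none, dist_comm, dist_some_none, dist_some_some_of_ne hj]
    ring
  refine le_trans ?_ (hdeg hcenter)
  refine Set.ncard_le_ncard_of_injOn (fun j => some (j, ⟨0, hℓ⟩)) ?_ (by intro _ _ _ _; simp)
  rintro j ⟨r, hr⟩
  refine ⟨hU hr hcenter ?_, adj_none_some.mpr rfl⟩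
  rw [dist_some_root, dist_some_none, dist_some_none]

end SubdividedStar

theorem SimpleGraph.IsTree.natCard_verts_inter_le_of_subdividedStar {V : Type*} [Finite V]
    {T : SimpleGraph V} (hT : T.IsTree) {S S' : T.Subgraph} (hS : S.IsIsometric)
    (hS' : S'.IsIsometric) {b ℓ : ℕ} (hℓ : 0 < ℓ) (e' : S'.coe ≃g SubdividedStar b ℓ) {n : ℕ}
    (hn : 1 ≤ n) (hdeg : (e'.symm none : V) ∈ S.verts → (S.neighborSet (e'.symm none)).ncard ≤ n) :
    Nat.card ↥(S.verts ∩ S'.verts) ≤ 1 + n * ℓ := by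
  let f : SubdividedStar b ℓ →g T := S'.hom.comp e'.symm.toHom
  have hf : Function.Injective f := Subtype.val_injective.comp e'.symm.injective
  have hrange : Set.range f = S'.verts := by
    ext v
    refine ⟨fun ⟨x, hx⟩ => hx ▸ (e'.symm x).2, fun hv => ⟨e' ⟨v, hv⟩, by simp [f]⟩⟩
  have hdist (x y) : T.dist (f x) (f y) = (SubdividedStar b ℓ).dist x y :=
    (hS'.dist_eq _ _).symm.trans (e'.symm.dist_eq x y)
  rw [Nat.card_coe_set_eq, ← hrange,
    ← Set.image_preimage_eq_inter_range, Set.ncard_image_of_injective _ hf]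
  exact SubdividedStar.ncard_le_of_isGeodesicallyConvex hℓ
    ((hT.isGeodesicallyConvex_verts hS).preimage hdist) hn
    fun h => (hS.ncard_preimage_inter_neighborSet_le f hf h).trans (hdeg h)

theorem stmt_10_general (t : ℕ) (ht : 3 ≤ t) {V : Type} [Finite V]
    (T : SimpleGraph V) (hT : T.IsTree)
    (p p' : ℕ) (hp1 : 1 ≤ p) (hp'3 : p' ≤ 3)
    (S S' : T.Subgraph)
    (hSiso : ∀ u v : S.verts, S.coe.edist u v = T.edist u.val v.val)
    (hS'iso : ∀ u v : S'.verts, S'.coe.edist u v = T.edist u.val v.val)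
    (e : S.coe ≃g typeStar t p) (e' : S'.coe ≃g typeStar t p') :
    ((e.symm none : S.verts).val ≠ (e'.symm none : S'.verts).val →
      Nat.card ↥(S.verts ∩ S'.verts) ≤ 1 + 2 * t ^ (3 - p')) ∧
    (p ≠ p' →
      Nat.card ↥(S.verts ∩ S'.verts) ≤ 1 + t ^ (p + 3 - p')) := by
  have hdeg (v : V) (hv : v ∈ S.verts) :
      (S.neighborSet v).ncard = ((typeStar t p).neighborSet (e ⟨v, hv⟩)).ncard := by
    rw [← Nat.card_coe_set_eq, ← Nat.card_coe_set_eq]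
    exact Nat.card_congr ((Subgraph.coeNeighborSetEquiv ⟨v, hv⟩).symm.trans (e.mapNeighborSet _))
  have hbound (n : ℕ) :=
    hT.natCard_verts_inter_le_of_subdividedStar hSiso hS'iso (by positivity) e' (n := n)
  refine ⟨fun hne => hbound 2 one_le_two fun hv => ?_, fun _ => ?_⟩
  · have hc : e ⟨_, hv⟩ ≠ none := fun h => hne (by rw [← h, e.symm_apply_apply]; rfl)
    obtain ⟨x, hx⟩ := Option.ne_none_iff_exists'.mp hc
    rw [hdeg _ hv, hx]
    exact SubdividedStar.ncard_neighborSet_some_le x.1 x.2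
  · have htp : 2 ≤ t ^ p := (show 2 ≤ t by omega).trans (le_self_pow (by omega) (by omega))
    calc Nat.card ↥(S.verts ∩ S'.verts) ≤ 1 + t ^ p * t ^ (3 - p') :=
          hbound _ (by omega) fun hv => (hdeg _ hv).trans_le <|
            (SubdividedStar.ncard_neighborSet_le (by positivity) _).trans (max_le le_rfl htp)
      _ = 1 + t ^ (p + 3 - p') := by rw [← pow_add]; congr 2; omega

/-- Let `T` be a tree, `S` and `S'` isometric subgraphs of `T`
isomorphic to a type-`p` star and a type-`p'` star with `1 ≤ p ≤ p' ≤ 3` and with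
centers `c` and `c'`. If `c ≠ c'` then `|V(S) ∩ V(S')| ≤ 1 + 2 t^(3-p')`, and if
`p ≠ p'` then `|V(S) ∩ V(S')| ≤ 1 + t^(p+3-p')`. -/
theorem stmt_10 (t : ℕ) (ht : 3 ≤ t) {V : Type} [Finite V]
    (T : SimpleGraph V) (hT : T.IsTree)
    (p p' : ℕ) (hp1 : 1 ≤ p) (hpp' : p ≤ p') (hp'3 : p' ≤ 3)
    (S S' : T.Subgraph)
    (hSiso : ∀ u v : S.verts, S.coe.edist u v = T.edist u.val v.val)
    (hS'iso : ∀ u v : S'.verts, S'.coe.edist u v = T.edist u.val v.val)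
    (e : S.coe ≃g typeStar t p) (e' : S'.coe ≃g typeStar t p') :
    ((e.symm none : S.verts).val ≠ (e'.symm none : S'.verts).val →
      Nat.card ↥(S.verts ∩ S'.verts) ≤ 1 + 2 * t ^ (3 - p')) ∧
    (p ≠ p' →
      Nat.card ↥(S.verts ∩ S'.verts) ≤ 1 + t ^ (p + 3 - p')) :=
  stmt_10_general t ht T hT p p' hp1 hp'3 S S' hSiso hS'iso e e'
end
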